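/- Let p be a prime and let G = (ℤ/p²ℤ, +, ∘) be the skew left brace with a∘b := a + b + pab, E the trivial left semi-brace on ℤ/pℤ, and α : E → Aut(G) given by α_e(g) := (1+pe)g. Then the semidirect product left semi-brace B = G ⋊_α E is left nilpotent, i.e. B^n = E for some n, where B^1 := B and B^{n+1} := B·B^n + E with a·b := λ_a(a⁻) + a∘b + λ_b(b⁻). -/
import Mathlib


/- The left brace `G = (ℤ/p²ℤ, +, ∘)` with `a ∘ b = a + b + p·a·b`, the trivial left
semi-brace `E = ℤ/pℤ`, the action `α_e(g) = (1 + p·e)·g`, and the semidirect product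
left semi-brace `B = G ⋊_α E` on `ℤ/p²ℤ × ℤ/pℤ` with
`(g₁,e₁)+(g₂,e₂) = (g₁+g₂, e₂)` and `(g₁,e₁)∘(g₂,e₂) = (g₁ ∘ α_{e₁}(g₂), e₁+e₂)`. -/

/-- The circle (brace) multiplication `a ∘ b = a + b + p·a·b` on `ℤ/p²ℤ`. -/
def cMul (p : ℕ) (a b : ZMod (p ^ 2)) : ZMod (p ^ 2) := a + b + (p : ZMod (p ^ 2)) * a * b

/-- The circle inverse `a⁻ = -a·(1 - p·a)` on `ℤ/p²ℤ`. -/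
def cInv (p : ℕ) (a : ZMod (p ^ 2)) : ZMod (p ^ 2) := -a * (1 - (p : ZMod (p ^ 2)) * a)

/-- The action `α_e(g) = (1 + p·e)·g`. -/
def cAlpha (p : ℕ) (e : ZMod p) (g : ZMod (p ^ 2)) : ZMod (p ^ 2) :=
  (1 + (p : ZMod (p ^ 2)) * (e.val : ZMod (p ^ 2))) * g

/-- Addition of `B = G ⋊_α E`. -/
def zAdd (p : ℕ) (x y : ZMod (p ^ 2) × ZMod p) : ZMod (p ^ 2) × ZMod p := (x.1 + y.1, y.2)

/-- Multiplication of `B = G ⋊_α E`. -/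
def zMul (p : ℕ) (x y : ZMod (p ^ 2) × ZMod p) : ZMod (p ^ 2) × ZMod p :=
  (cMul p x.1 (cAlpha p x.2 y.1), x.2 + y.2)

/-- Multiplicative inverse in `B = G ⋊_α E`. -/
def zInv (p : ℕ) (x : ZMod (p ^ 2) × ZMod p) : ZMod (p ^ 2) × ZMod p :=
  (cAlpha p (-x.2) (cInv p x.1), -x.2)

/-- The lambda map `λ_a(b) = a ∘ (a⁻ + b)` of `B`. -/
def zLam (p : ℕ) (a b : ZMod (p ^ 2) × ZMod p) : ZMod (p ^ 2) × ZMod p :=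
  zMul p a (zAdd p (zInv p a) b)

/-- The operation `a · b = λ_a(a⁻) + a∘b + λ_b(b⁻)` of `B`. -/
def zDot (p : ℕ) (a b : ZMod (p ^ 2) × ZMod p) : ZMod (p ^ 2) × ZMod p :=
  zAdd p (zAdd p (zLam p a (zInv p a)) (zMul p a b)) (zLam p b (zInv p b))

/-- The series `B¹ = B`, `Bⁿ⁺¹ = B·Bⁿ + E` (indexed from `0`): `B·Bⁿ + E` consists of the
pairs whose first component lies in the additive subgroup of `(ℤ/p²ℤ,+)` generated by the
`G`-components of the elements `x·y`, `x ∈ B`, `y ∈ Bⁿ`. -/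
def zSeries (p : ℕ) : ℕ → Set (ZMod (p ^ 2) × ZMod p)
  | 0 => Set.univ
  | n + 1 => {b : ZMod (p ^ 2) × ZMod p | b.1 ∈ AddSubgroup.closure
      {g : ZMod (p ^ 2) | ∃ x : ZMod (p ^ 2) × ZMod p, ∃ y ∈ zSeries p n,
        zDot p x y = (g, 0)}}

lemma pp_zero (p : ℕ) : (p : ZMod (p ^ 2)) * p = 0 := by
  have : ((p ^ 2 : ℕ) : ZMod (p ^ 2)) = 0 := ZMod.natCast_self _
  push_cast at this
  rw [← this]; ring

lemma pn (p : ℕ) [NeZero p] (e : ZMod p) :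
    (p : ZMod (p ^ 2)) * (((-e).val : ℕ) : ZMod (p ^ 2)) = -((p : ZMod (p ^ 2)) * (e.val : ZMod (p ^ 2))) := by
  have h : ((-e).val + e.val) % p = 0 := by
    have := ZMod.val_add (-e) e
    simp at this
    omega
  obtain ⟨k, hk⟩ : p ∣ (-e).val + e.val := Nat.dvd_of_mod_eq_zero h
  have h1 : (((-e).val : ZMod (p^2)) + (e.val : ZMod (p^2))) = (p : ZMod (p^2)) * k := by
    rw [← Nat.cast_add, hk]; push_cast; ring
  have h3 : (p : ZMod (p^2)) * (((-e).val : ZMod (p^2)) + (e.val : ZMod (p^2))) = 0 := by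
    rw [h1, ← mul_assoc, pp_zero, zero_mul]
  linear_combination h3

lemma dot_eq (p : ℕ) [NeZero p] (x y : ZMod (p ^ 2) × ZMod p) :
    zDot p x y = ((p : ZMod (p ^ 2)) * y.1 * ((x.2.val : ZMod (p ^ 2)) + x.1), 0) := by
  have k2 : (p : ZMod (p^2))^2 = 0 := by linear_combination pp_zero p
  have k3 : (p : ZMod (p^2))^3 = 0 := by linear_combination (p : ZMod (p^2)) * pp_zero p
  have k4 : (p : ZMod (p^2))^4 = 0 := by linear_combination ((p : ZMod (p^2)) * p) * pp_zero p
  ext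
  · simp only [zDot, zAdd, zMul, zLam, zInv, cMul, cInv, cAlpha, pn]
    ring_nf
    simp [k2, k3, k4]
  · simp [zDot, zAdd, zMul, zLam, zInv]

/-- The left semi-brace `B = G ⋊_α E` is left nilpotent: `Bⁿ = E` for some `n`, where `E`
is the set of additive idempotents of `B`. -/
theorem stmt19 (p : ℕ) (hp : p.Prime) :
    ∃ n : ℕ, zSeries p n = {b : ZMod (p ^ 2) × ZMod p | zAdd p b b = b} := by
  haveI : NeZero p := ⟨hp.ne_zero⟩
  refine ⟨2, ?_⟩
  have hS0 : ∀ u ∈ AddSubgroup.closure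
      {g : ZMod (p ^ 2) | ∃ x : ZMod (p ^ 2) × ZMod p, ∃ y ∈ zSeries p 0,
        zDot p x y = (g, 0)}, (p : ZMod (p ^ 2)) * u = 0 := by
    intro u hu
    have hle : AddSubgroup.closure
        {g : ZMod (p ^ 2) | ∃ x : ZMod (p ^ 2) × ZMod p, ∃ y ∈ zSeries p 0,
          zDot p x y = (g, 0)} ≤ (AddMonoidHom.mulLeft (p : ZMod (p ^ 2))).ker := by
      rw [AddSubgroup.closure_le]
      rintro g ⟨x, y, -, hxy⟩
      rw [dot_eq] at hxy
      have hg : g = (p : ZMod (p ^ 2)) * y.1 * ((x.2.val : ZMod (p ^ 2)) + x.1) :=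
        (Prod.mk.injEq _ _ _ _ ▸ hxy).1.symm
      simp only [SetLike.mem_coe, AddMonoidHom.mem_ker, AddMonoidHom.coe_mulLeft]
      rw [hg]
      linear_combination (y.1 * ((x.2.val : ZMod (p ^ 2)) + x.1)) * pp_zero p
    have := hle hu
    simpa [AddMonoidHom.mem_ker] using this
  have hS1 : {g : ZMod (p ^ 2) | ∃ x : ZMod (p ^ 2) × ZMod p, ∃ y ∈ zSeries p 1,
        zDot p x y = (g, 0)} ⊆ {(0 : ZMod (p ^ 2))} := by
    rintro g ⟨x, y, hy, hxy⟩
    have hpy : (p : ZMod (p ^ 2)) * y.1 = 0 := hS0 y.1 (by simpa [zSeries] using hy)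
    rw [dot_eq] at hxy
    have hg : g = (p : ZMod (p ^ 2)) * y.1 * ((x.2.val : ZMod (p ^ 2)) + x.1) :=
      (Prod.mk.injEq _ _ _ _ ▸ hxy).1.symm
    simp only [Set.mem_singleton_iff]
    rw [hg, hpy, zero_mul]
  have hclosure : AddSubgroup.closure {g : ZMod (p ^ 2) | ∃ x : ZMod (p ^ 2) × ZMod p,
      ∃ y ∈ zSeries p 1, zDot p x y = (g, 0)} = ⊥ := by
    rw [AddSubgroup.closure_eq_bot_iff]
    exact hS1
  have h2 : zSeries p 2 = {b : ZMod (p ^ 2) × ZMod p | b.1 ∈ AddSubgroup.closure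
      {g : ZMod (p ^ 2) | ∃ x : ZMod (p ^ 2) × ZMod p, ∃ y ∈ zSeries p 1,
        zDot p x y = (g, 0)}} := rfl
  ext b
  rw [h2]
  simp only [Set.mem_setOf_eq, hclosure, AddSubgroup.mem_bot]
  constructor
  · intro h1
    show zAdd p b b = b
    simp [zAdd, Prod.ext_iff, h1]
  · intro h
    have h' : b.1 + b.1 = b.1 := congrArg Prod.fst h
    exact add_eq_right.mp h'
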